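/- Let T be the generalized Cantor set built from (α_k) with 0 < α_k < 1/2. Then the Lebesgue measure of T equals lim_{k→∞} (2^k ∏_{j<k} α_j) = ∏_{j=0}^{∞} (2α_j). In particular, if α_k → 1/2 fast enough that ∏ (2α_j) > 0, then T has positive Lebesgue measure. -/

import Mathlib

/-- Level-`k` approximation of the generalized Cantor set built from ratios
`α n, α (n+1), …` (applied outermost first). `genA α n (k+1)` is obtained from
`genA α n k`-structure by keeping the two closed end-intervals of relative
length `α n` of `[0,1]` and recursing with the shifted sequence. -/
def genA (α : ℕ → ℝ) : ℕ → ℕ → Set ℝ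
  | _, 0 => Set.Icc 0 1
  | n, (k + 1) =>
      ((fun x => α n * x) '' genA α (n + 1) k) ∪
      ((fun x => 1 - α n + α n * x) '' genA α (n + 1) k)

/-- The generalized Cantor set built from the sequence of ratios `α`. -/
def genCantor (α : ℕ → ℝ) : Set ℝ := ⋂ k, genA α 0 k

/-- The graininess (forward-jump gap) of a set `T` at `β`. -/
noncomputable def mu (T : Set ℝ) (β : ℝ) : ℝ := sInf {t ∈ T | β < t} - β

/-!
Level `k + 1` of the construction is the union of the images of level `k` (for the shifted
sequence) under the homotheties of ratio `α n` centred at `0` and `1`. Since `α n < 1 / 2` these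
images are disjoint, so each step multiplies the volume by `2 α n`. The levels are compact and
decreasing, so by continuity of measure from above the volume of their intersection is the limit
of `∏ j < k, 2 α j`.
-/

open Filter MeasureTheory Set

theorem genA_succ (α : ℕ → ℝ) (n k : ℕ) :
    genA α n (k + 1) =
      AffineMap.homothety 0 (α n) '' genA α (n + 1) k ∪
        AffineMap.homothety 1 (α n) '' genA α (n + 1) k := by
  rw [genA]
  congr 1 <;> refine image_congr fun x _ => ?_ <;> simp only [AffineMap.homothety_apply,
    vsub_eq_sub, vadd_eq_add, smul_eq_mul] <;> ring

theorem isCompact_genA (α : ℕ → ℝ) (n k : ℕ) : IsCompact (genA α n k) := by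
  induction k generalizing n with
  | zero => exact isCompact_Icc
  | succ k ih =>
    rw [genA_succ]
    exact ((ih _).image (AffineMap.homothety_continuous _ _)).union
      ((ih _).image (AffineMap.homothety_continuous _ _))

section Nested

variable {α : ℕ → ℝ} (hα : ∀ n, α n ∈ Icc (0 : ℝ) 1)
include hα

theorem genA_subset_Icc (n k : ℕ) : genA α n k ⊆ Icc 0 1 := by
  induction k generalizing n with
  | zero => exact subset_rfl
  | succ k ih =>
    obtain ⟨ha0, ha1⟩ := hα n
    rintro _ (⟨y, hy, rfl⟩ | ⟨y, hy, rfl⟩) <;> obtain ⟨hy0, hy1⟩ := ih (n + 1) hy <;>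
      constructor <;> nlinarith

theorem genA_succ_subset (n k : ℕ) : genA α n (k + 1) ⊆ genA α n k := by
  induction k generalizing n with
  | zero => exact genA_subset_Icc hα n 1
  | succ k ih => exact union_subset_union (image_mono (ih _)) (image_mono (ih _))

end Nested

theorem disjoint_homothety_zero_one {a : ℝ} (ha : a ∈ Ico (0 : ℝ) (1 / 2)) {s : Set ℝ}
    (hs : s ⊆ Icc 0 1) :
    Disjoint (AffineMap.homothety 0 a '' s) (AffineMap.homothety 1 a '' s) := by
  simp only [disjoint_left, mem_image, not_exists, not_and, forall_exists_index, and_imp,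
    AffineMap.homothety_apply, vsub_eq_sub, vadd_eq_add, smul_eq_mul]
  rintro _ y hy rfl z hz hyz
  obtain ⟨ha0, ha1⟩ := ha
  obtain ⟨hy0, hy1⟩ := hs hy
  obtain ⟨hz0, hz1⟩ := hs hz
  nlinarith

theorem volume_genA {α : ℕ → ℝ} (hα : ∀ n, α n ∈ Ico (0 : ℝ) (1 / 2)) (n k : ℕ) :
    volume (genA α n k) = ENNReal.ofReal (∏ j ∈ Finset.range k, 2 * α (n + j)) := by
  have hα_Icc : ∀ n, α n ∈ Icc (0 : ℝ) 1 := fun n =>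
    Ico_subset_Icc_self.trans (Icc_subset_Icc_right (by norm_num)) (hα n)
  induction k generalizing n with
  | zero => simp [genA]
  | succ k ih =>
    have ha := (hα n).1
    have hprod : 0 ≤ ∏ j ∈ Finset.range k, 2 * α (n + 1 + j) :=
      Finset.prod_nonneg fun j _ => by linarith [(hα (n + 1 + j)).1]
    have hmeas : MeasurableSet (AffineMap.homothety 1 (α n) '' genA α (n + 1) k) :=
      ((isCompact_genA α _ _).image (AffineMap.homothety_continuous _ _)).measurableSet
    rw [genA_succ, measure_union (disjoint_homothety_zero_one (hα n)
      (genA_subset_Icc hα_Icc _ _)) hmeas, Measure.addHaar_image_homothety,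
      Measure.addHaar_image_homothety, ih, Module.finrank_self, pow_one, abs_of_nonneg ha,
      ← ENNReal.ofReal_mul ha, ← ENNReal.ofReal_add (by positivity) (by positivity),
      Finset.prod_range_succ']
    congr 1
    simp only [add_zero, ← add_assoc, add_right_comm n _ 1]
    ring

theorem volume_genCantor_of_tendsto {α : ℕ → ℝ} (hα : ∀ n, α n ∈ Ico (0 : ℝ) (1 / 2)) {L : ℝ}
    (hL : Tendsto (fun k => ∏ j ∈ Finset.range k, 2 * α j) atTop (nhds L)) :
    volume (genCantor α) = ENNReal.ofReal L := by
  have hα_Icc : ∀ n, α n ∈ Icc (0 : ℝ) 1 := fun n =>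
    Ico_subset_Icc_self.trans (Icc_subset_Icc_right (by norm_num)) (hα n)
  have h_lim : Tendsto (fun k => volume (genA α 0 k)) atTop (nhds (volume (genCantor α))) :=
    tendsto_measure_iInter_atTop
      (fun k => (isCompact_genA α 0 k).measurableSet.nullMeasurableSet)
      (antitone_nat_of_succ_le (genA_succ_subset hα_Icc 0)) ⟨0, by simp [genA]⟩
  simp only [volume_genA hα, zero_add] at h_lim
  exact tendsto_nhds_unique h_lim ((ENNReal.continuous_ofReal.tendsto L).comp hL)

/-- the Lebesgue measure of the generalized Cantor set equals
`lim_k 2^k ∏_{j<k} α_j = ∏_j (2 α_j)`; in particular if that limit is positive,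
`T` has positive measure. -/
theorem genCantor_volume (α : ℕ → ℝ) (hα : ∀ k, 0 < α k ∧ α k < 1 / 2) (L : ℝ)
    (hL : Tendsto (fun k => (2 : ℝ) ^ k * ∏ j ∈ Finset.range k, α j) atTop (nhds L)) :
    (∀ k, (2 : ℝ) ^ k * ∏ j ∈ Finset.range k, α j = ∏ j ∈ Finset.range k, (2 * α j)) ∧
    volume (genCantor α) = ENNReal.ofReal L ∧
    (0 < L → 0 < volume (genCantor α)) := by
  have h_pow_mul_prod (k : ℕ) :
      (2 : ℝ) ^ k * ∏ j ∈ Finset.range k, α j = ∏ j ∈ Finset.range k, (2 * α j) := by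
    simpa using Finset.pow_card_mul_prod (s := Finset.range k) (f := α) (b := 2)
  have h_vol : volume (genCantor α) = ENNReal.ofReal L :=
    volume_genCantor_of_tendsto (fun n => ⟨(hα n).1.le, (hα n).2⟩)
      (by simpa only [h_pow_mul_prod] using hL)
  exact ⟨h_pow_mul_prod, h_vol, fun hL_pos => h_vol ▸ ENNReal.ofReal_pos.2 hL_pos⟩
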